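/- arXiv:1210.5001 — 2 statements merged into one kernel-verified Lean document; each statement's English description precedes it below -/
import Mathlib

section
/- Let f(x) = Σ_{m≥0} B_m χ(m,x) be a measure-preserving 1-Lipschitz function ℤ_p → ℤ_p. Then B_0, …, B_{p−1} are pairwise distinct modulo p, and |B_m|_p = |q(m)|_p = p^{−⌊log_p m⌋} for all m ≥ p. -/
open MeasureTheory Finset

namespace VDP

noncomputable instance (p : ℕ) [Fact p.Prime] : MeasurableSpace ℤ_[p] := borel _
instance (p : ℕ) [Fact p.Prime] : BorelSpace ℤ_[p] := ⟨rfl⟩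

/-- The Haar probability measure on `ℤ_[p]`. -/
noncomputable def haarZp (p : ℕ) [Fact p.Prime] : Measure ℤ_[p] :=
  Measure.addHaarMeasure ⊤

/-- `f` is 1-Lipschitz. -/
def IsLip (p : ℕ) [Fact p.Prime] (f : ℤ_[p] → ℤ_[p]) : Prop :=
  ∀ x y : ℤ_[p], ‖f x - f y‖ ≤ ‖x - y‖

/-- The van der Put basis function `χ(m, x)` on `ℤ_[p]` (with `⌊log_p 0⌋ = 0`). -/
noncomputable def chi (p : ℕ) [Fact p.Prime] (m : ℕ) (x : ℤ_[p]) : ℤ_[p] :=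
  if ‖x - (m : ℤ_[p])‖ ≤ ((p : ℝ) ^ (Nat.log p m + 1))⁻¹ then 1 else 0

/-- `q(m) = m_s p^s`, the leading term of the `p`-adic expansion of `m`. -/
def q (p m : ℕ) : ℕ := m / p ^ Nat.log p m * p ^ Nat.log p m

/-- `f` has van der Put expansion with coefficients `B`. -/
def vdpExpansion (p : ℕ) [Fact p.Prime] (f : ℤ_[p] → ℤ_[p]) (B : ℕ → ℤ_[p]) : Prop :=
  ∀ x, f x = ∑' m, B m * chi p m x

/-- `f` is bijective modulo `p^n`. -/
def BijModPow (p : ℕ) [Fact p.Prime] (f : ℤ_[p] → ℤ_[p]) (n : ℕ) : Prop :=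
  Function.Bijective fun a : ZMod (p ^ n) => PadicInt.toZModPow n (f ((a.val : ℕ) : ℤ_[p]))

/-- `f` is transitive modulo `p^n`. -/
def TransModPow (p : ℕ) [Fact p.Prime] (f : ℤ_[p] → ℤ_[p]) (n : ℕ) : Prop :=
  ∀ x : ℤ_[p], ∀ a : ZMod (p ^ n), ∃ k : ℕ, PadicInt.toZModPow n (f^[k] x) = a

/-- The `i`-th digit of the canonical `p`-adic expansion of `x`. -/
noncomputable def digit (p : ℕ) [Fact p.Prime] (x : ℤ_[p]) (i : ℕ) : ℕ :=
  x.appr (i + 1) / p ^ i % p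

end VDP

/-!
A measure-preserving 1-Lipschitz map of `ℤ_p` is an isometry: were two points brought closer
than they are, the two disjoint closed balls of that radius around them would both land in one
ball of the same Haar measure.

Since `χ(j, N) = 1` exactly when `N ≡ j mod p^(⌊log_p j⌋ + 1)`, evaluating the van der Put series
at natural numbers gives `B_i = f(i)` for `i < p` and `B_m = f(m) - f(m mod p^s)` for `m ≥ p`,
where `s = ⌊log_p m⌋`. So `|B_i - B_j|_p = |i - j|_p = 1` and
`|B_m|_p = |m - (m mod p^s)|_p = |q(m)|_p = p^(-s)`.
-/

open Metric

namespace MeasureTheory.MeasurePreserving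

variable {E : Type*} [NormedAddCommGroup E] [IsUltrametricDist E] [MeasurableSpace E]
  [BorelSpace E] [ProperSpace E] {μ : Measure E} [μ.IsAddHaarMeasure] {f : E → E}

theorem dist_le_of_dist_map_le (hmp : MeasurePreserving f μ μ)
    (hf : LipschitzWith 1 f) {x y : E} {r : ℝ} (hr : 0 < r) (h : dist (f x) (f y) ≤ r) :
    dist x y ≤ r := by
  by_contra hxy
  set S := closedBall (f x) r
  have hdisj : Disjoint (closedBall x r) (closedBall y r) := by
    refine (IsUltrametricDist.closedBall_eq_or_disjoint x y r).resolve_left fun heq => hxy ?_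
    rw [dist_comm, ← mem_closedBall, heq]
    exact mem_closedBall_self hr.le
  have hmaps : ∀ z, f z ∈ S → closedBall z r ⊆ f ⁻¹' S := fun z hz => by
    rw [show S = closedBall (f z) r from IsUltrametricDist.closedBall_eq_of_mem hz]
    exact fun w hw => by simpa using hf.mapsTo_closedBall z r hw
  have hball : ∀ z, μ (closedBall z r) = μ S := fun z => by
    rw [Measure.addHaar_closedBall_center, Measure.addHaar_closedBall_center μ (f x)]
  have hS_pos : 0 < μ S := measure_closedBall_pos μ _ hr
  have hS_fin : μ S ≠ ⊤ := (isCompact_closedBall _ _).measure_ne_top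
  have hdouble : μ S + μ S ≤ 0 + μ S := calc
    μ S + μ S = μ (closedBall x r ∪ closedBall y r) := by
      rw [measure_union hdisj measurableSet_closedBall, hball x, hball y]
    _ ≤ μ (f ⁻¹' S) :=
      measure_mono <| Set.union_subset (hmaps x (mem_closedBall_self hr.le))
        (hmaps y (by rwa [mem_closedBall, dist_comm]))
    _ = 0 + μ S := by rw [hmp.measure_preimage measurableSet_closedBall.nullMeasurableSet, zero_add]
  exact hS_pos.ne' (nonpos_iff_eq_zero.mp (ENNReal.le_of_add_le_add_right hS_fin hdouble))

theorem isometry_of_lipschitzWith (hmp : MeasurePreserving f μ μ)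
    (hf : LipschitzWith 1 f) : Isometry f := by
  refine Isometry.of_dist_eq fun x y => (hf.dist_le_mul x y).trans (by simp) |>.antisymm ?_
  by_contra! hlt
  obtain ⟨r, hfr, hr⟩ := exists_between hlt
  exact (hmp.dist_le_of_dist_map_le hf (dist_nonneg.trans_lt hfr) hfr.le).not_gt hr

end MeasureTheory.MeasurePreserving

namespace VDP

variable {p : ℕ} [hp : Fact p.Prime]

instance : (haarZp p).IsAddHaarMeasure := by
  unfold haarZp; infer_instance

theorem IsLip.lipschitzWith {f : ℤ_[p] → ℤ_[p]} (hf : IsLip p f) : LipschitzWith 1 f :=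
  LipschitzWith.of_dist_le_mul fun x y => by simpa [dist_eq_norm] using hf x y

theorem norm_sub_le_iff_toZModPow_eq (n : ℕ) (x y : ℤ_[p]) :
    ‖x - y‖ ≤ ((p : ℝ) ^ n)⁻¹ ↔ PadicInt.toZModPow n x = PadicInt.toZModPow n y := by
  rw [← zpow_natCast, ← zpow_neg, PadicInt.norm_le_pow_iff_mem_span_pow,
    ← PadicInt.ker_toZModPow, RingHom.mem_ker, map_sub, sub_eq_zero]

theorem chi_natCast (j N : ℕ) :
    chi p j N = if N % p ^ (Nat.log p j + 1) = j then 1 else 0 := by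
  refine if_congr ?_ rfl rfl
  rw [norm_sub_le_iff_toZModPow_eq, map_natCast, map_natCast, ZMod.natCast_eq_natCast_iff',
    Nat.mod_eq_of_lt (Nat.lt_pow_succ_log_self hp.out.one_lt j)]

theorem chi_natCast_self (N : ℕ) : chi p N N = 1 := by
  rw [chi_natCast, if_pos (Nat.mod_eq_of_lt (Nat.lt_pow_succ_log_self hp.out.one_lt N))]

theorem chi_natCast_of_lt {j N : ℕ} (h : N < j) : chi p j N = 0 := by
  rw [chi_natCast, if_neg ((Nat.mod_le _ _).trans_lt h).ne]

theorem chi_natCast_mod_pow_log {m j : ℕ} (hm : p ≤ m) (hj : j < m) :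
    chi p j ((m % p ^ Nat.log p m : ℕ) : ℤ_[p]) = chi p j m := by
  set s := Nat.log p m
  simp only [chi_natCast]
  rcases Nat.lt_or_ge (Nat.log p j) s with hjs | hjs
  · rw [Nat.mod_mod_of_dvd _ (pow_dvd_pow p hjs)]
  · have hj0 : j ≠ 0 := by
      rintro rfl
      simp only [Nat.log_zero_right] at hjs
      exact (Nat.log_pos hp.out.one_lt hm).not_ge hjs
    have hpj : p ^ s ≤ j := (Nat.pow_le_pow_right hp.out.pos hjs).trans (Nat.pow_log_le_self p hj0)
    have hm_lt : m < p ^ (Nat.log p j + 1) :=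
      (Nat.lt_pow_succ_log_self hp.out.one_lt m).trans_le
        (Nat.pow_le_pow_right hp.out.pos (by omega))
    rw [if_neg, if_neg]
    · rw [Nat.mod_eq_of_lt hm_lt]; omega
    · exact ((Nat.mod_le _ _).trans_lt ((Nat.mod_lt _ (pow_pos hp.out.pos _)).trans_le hpj)).ne

theorem chi_self_natCast_mod_pow_log {m : ℕ} (hm : p ≤ m) :
    chi p m ((m % p ^ Nat.log p m : ℕ) : ℤ_[p]) = 0 := by
  rw [chi_natCast, if_neg]
  exact ((Nat.mod_le _ _).trans_lt ((Nat.mod_lt _ (pow_pos hp.out.pos _)).trans_le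
    (Nat.pow_log_le_self p (hp.out.pos.trans_le hm).ne'))).ne

namespace vdpExpansion

variable {f : ℤ_[p] → ℤ_[p]} {B : ℕ → ℤ_[p]}

theorem apply_natCast_eq_sum (hB : vdpExpansion p f B) {N M : ℕ} (hNM : N ≤ M) :
    f N = ∑ j ∈ range (M + 1), B j * chi p j N := by
  rw [hB]
  exact tsum_eq_sum fun j hj => by
    rw [chi_natCast_of_lt (by simp only [mem_range] at hj; omega), mul_zero]

theorem coeff_eq_of_lt (hB : vdpExpansion p f B) {i : ℕ} (hi : i < p) : B i = f i := by
  rw [hB.apply_natCast_eq_sum le_rfl, sum_range_succ, chi_natCast_self, mul_one,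
    sum_eq_zero, zero_add]
  intro j hj
  rw [chi_natCast, Nat.log_of_lt ((mem_range.mp hj).trans hi), zero_add, pow_one,
    Nat.mod_eq_of_lt hi, if_neg (mem_range.mp hj).ne', mul_zero]

theorem coeff_eq_sub (hB : vdpExpansion p f B) {m : ℕ} (hm : p ≤ m) :
    B m = f m - f ((m % p ^ Nat.log p m : ℕ) : ℤ_[p]) := by
  rw [hB.apply_natCast_eq_sum le_rfl, hB.apply_natCast_eq_sum (Nat.mod_le m _), sum_range_succ,
    sum_range_succ, chi_natCast_self, chi_self_natCast_mod_pow_log hm, add_sub_add_comm,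
    ← sum_sub_distrib, sum_eq_zero fun j hj => by
      rw [chi_natCast_mod_pow_log hm (mem_range.mp hj), sub_self]]
  simp

end vdpExpansion

theorem q_eq_sub_mod (p m : ℕ) : q p m = m - m % p ^ Nat.log p m := by
  have := Nat.mod_add_div' m (p ^ Nat.log p m)
  rw [q]
  omega

theorem norm_natCast_q {m : ℕ} (hm : m ≠ 0) : ‖(q p m : ℤ_[p])‖ = ((p : ℝ) ^ Nat.log p m)⁻¹ := by
  set s := Nat.log p m
  have hd_pos : 0 < m / p ^ s := Nat.div_pos (Nat.pow_log_le_self p hm) (pow_pos hp.out.pos _)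
  have hd_lt : m / p ^ s < p :=
    Nat.div_lt_of_lt_mul (by rw [← pow_succ]; exact Nat.lt_pow_succ_log_self hp.out.one_lt m)
  have hd : ‖((m / p ^ s : ℕ) : ℤ_[p])‖ = 1 := PadicInt.norm_natCast_eq_one_iff.mpr
    (hp.out.coprime_iff_not_dvd.mpr (Nat.not_dvd_of_pos_of_lt hd_pos hd_lt))
  rw [q, Nat.cast_mul, Nat.cast_pow, norm_mul, hd, one_mul, PadicInt.norm_p_pow, zpow_neg,
    zpow_natCast]

theorem not_dvd_natCast_sub_natCast {i j : ℕ} (hi : i < p) (hj : j < p) (hij : i ≠ j) :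
    ¬ (p : ℤ_[p]) ∣ (i - j) := by
  rw [← PadicInt.norm_lt_one_iff_dvd,
    show ((i : ℤ_[p]) - j) = ((i - j : ℤ) : ℤ_[p]) by push_cast; ring,
    PadicInt.norm_int_lt_one_iff_dvd, ← Nat.modEq_iff_dvd]
  intro h
  rw [Nat.ModEq, Nat.mod_eq_of_lt hj, Nat.mod_eq_of_lt hi] at h
  exact hij h.symm

end VDP

open VDP MeasureTheory in
theorem stmt6 (p : ℕ) [Fact p.Prime] (f : ℤ_[p] → ℤ_[p]) (B : ℕ → ℤ_[p])
    (hf : IsLip p f) (hB : vdpExpansion p f B)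
    (hmp : MeasurePreserving f (haarZp p) (haarZp p)) :
    (∀ i j : ℕ, i < p → j < p → i ≠ j → ¬ (p : ℤ_[p]) ∣ (B i - B j)) ∧
      (∀ m : ℕ, p ≤ m →
        ‖B m‖ = ‖((q p m : ℕ) : ℤ_[p])‖ ∧ ‖B m‖ = ((p : ℝ) ^ Nat.log p m)⁻¹) := by
  have hiso : ∀ x y, ‖f x - f y‖ = ‖x - y‖ := fun x y => by
    rw [← dist_eq_norm, ← dist_eq_norm, (hmp.isometry_of_lipschitzWith hf.lipschitzWith).dist_eq]
  refine ⟨fun i j hi hj hij => ?_, fun m hm => ?_⟩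
  · rw [hB.coeff_eq_of_lt hi, hB.coeff_eq_of_lt hj, ← PadicInt.norm_lt_one_iff_dvd, hiso,
      PadicInt.norm_lt_one_iff_dvd]
    exact not_dvd_natCast_sub_natCast hi hj hij
  · have hBm : ‖B m‖ = ‖(q p m : ℤ_[p])‖ := by
      rw [hB.coeff_eq_sub hm, hiso, q_eq_sub_mod, Nat.cast_sub (Nat.mod_le _ _)]
    exact ⟨hBm, hBm.trans (norm_natCast_q ((Fact.out : p.Prime).pos.trans_le hm).ne')⟩
end

section
/- Let f : ℤ_p → ℤ_p be 1-Lipschitz with van der Put coefficients B_m satisfying (1) Σ_{m=0}^{p−1} B_m ≡ 0 (mod p) and (2) Σ_{m=p^{n−1}}^{p^n−1} B_m ≡ 0 (mod p^n) for all n ≥ 2. Then there exists a 1-Lipschitz function g : ℤ_p → ℤ_p with f(x) = g(x+1) − g(x) for all x. -/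
open MeasureTheory Finset

/-!
Let `S a = ∑_{k<a} f k` (`partialSum f a`); then `g` is the continuous extension of `S` from `ℕ`
to `ℤ_[p]`, and `g (x + 1) - g x = f x` holds on the dense set `ℕ`, hence everywhere. So it
suffices that `S` is 1-Lipschitz on `ℕ`, i.e. that `p ^ n ∣ S (b + p ^ n) - S b` for all `b`.
Since `f` is 1-Lipschitz, this difference is congruent to `S (p ^ n)` modulo `p ^ n`. Finally, on
`[0, p ^ n)` the function `χ(m, ·)` with `m < p ^ n` takes the value `1` exactly
`p ^ (n - ⌊log_p m⌋ - 1)` times, so `S (p ^ n) = ∑_{m<p^n} B m p ^ (n - ⌊log_p m⌋ - 1)`, which the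
two congruences on the `B m` make divisible by `p ^ n` by induction on `n`.
-/

namespace PadicInt

variable {p : ℕ} [Fact p.Prime]

theorem pow_dvd_iff_norm_le {n : ℕ} {x : ℤ_[p]} :
    (p : ℤ_[p]) ^ n ∣ x ↔ ‖x‖ ≤ ((p : ℝ) ^ n)⁻¹ := by
  rw [← zpow_natCast, ← zpow_neg, norm_le_pow_iff_mem_span_pow, Ideal.mem_span_singleton]

theorem norm_le_norm_of_forall_pow_dvd {x y : ℤ_[p]} (hx : x ≠ 0)
    (h : ∀ n : ℕ, (p : ℤ_[p]) ^ n ∣ x → (p : ℤ_[p]) ^ n ∣ y) : ‖y‖ ≤ ‖x‖ := by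
  have hnorm : ‖x‖ = ((p : ℝ) ^ x.valuation)⁻¹ := by
    rw [norm_eq_zpow_neg_valuation hx, zpow_neg, zpow_natCast]
  rw [hnorm, ← pow_dvd_iff_norm_le]
  exact h _ (pow_dvd_iff_norm_le.2 hnorm.le)

end PadicInt

namespace VDP

open PadicInt

variable {p : ℕ} [Fact p.Prime]

theorem isLip_iff_lipschitzWith {f : ℤ_[p] → ℤ_[p]} : IsLip p f ↔ LipschitzWith 1 f := by
  simp only [IsLip, lipschitzWith_iff_norm_sub_le, NNReal.coe_one, one_mul]

noncomputable def partialSum (f : ℤ_[p] → ℤ_[p]) (a : ℕ) : ℤ_[p] :=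
  ∑ k ∈ range a, f k

theorem IsLip.continuous {f : ℤ_[p] → ℤ_[p]} (hf : IsLip p f) : Continuous f :=
  (isLip_iff_lipschitzWith.1 hf).continuous

theorem IsLip.pow_dvd_sub {f : ℤ_[p] → ℤ_[p]} (hf : IsLip p f) {n : ℕ} {x y : ℤ_[p]}
    (h : (p : ℤ_[p]) ^ n ∣ x - y) : (p : ℤ_[p]) ^ n ∣ f x - f y :=
  pow_dvd_iff_norm_le.2 ((hf x y).trans (pow_dvd_iff_norm_le.1 h))

theorem chi_eq_of_pow_dvd_sub {m : ℕ} {x y : ℤ_[p]}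
    (h : (p : ℤ_[p]) ^ (Nat.log p m + 1) ∣ x - y) : chi p m x = chi p m y := by
  have hxy : x - m = (x - y) + (y - m) := by ring
  unfold chi
  congr 1
  rw [← pow_dvd_iff_norm_le, ← pow_dvd_iff_norm_le, hxy, dvd_add_right h]

theorem chi_periodic (m : ℕ) :
    Function.Periodic (fun k : ℕ => chi p m k) (p ^ (Nat.log p m + 1)) :=
  fun k => chi_eq_of_pow_dvd_sub (by push_cast; rw [add_sub_cancel_left])

theorem chi_natCast_of_lt_s10 {m k : ℕ} (hk : k < p ^ (Nat.log p m + 1)) :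
    chi p m k = if k = m then 1 else 0 := by
  by_cases hkm : k = m
  · simp [chi, hkm]
  rw [chi, if_neg hkm, if_neg]
  rw [← pow_dvd_iff_norm_le,
    show (k : ℤ_[p]) - m = ((k - m : ℤ) : ℤ_[p]) by push_cast; ring, pow_p_dvd_int_iff]
  intro h
  have hm : m < p ^ (Nat.log p m + 1) := Nat.lt_pow_succ_log_self (Fact.out : p.Prime).one_lt m
  exact hkm (Nat.ModEq.eq_of_lt_of_lt (Nat.modEq_iff_dvd.2 (by exact_mod_cast h)) hm hk).symm

theorem sum_range_chi (m c : ℕ) :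
    ∑ k ∈ range (c * p ^ (Nat.log p m + 1)), chi p m k = c := by
  induction c with
  | zero => simp
  | succ c ih =>
    have hone : ∑ k ∈ range (p ^ (Nat.log p m + 1)), chi p m k = 1 := by
      rw [sum_congr rfl fun k hk => chi_natCast_of_lt_s10 (mem_range.1 hk), sum_ite_eq',
        if_pos (mem_range.2 (Nat.lt_pow_succ_log_self (Fact.out : p.Prime).one_lt m))]
    rw [add_one_mul, sum_range_add, ih, Nat.cast_succ, ← hone]
    exact congrArg _ (sum_congr rfl fun k _ => by rw [add_comm]; exact (chi_periodic m).nat_mul c k)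

theorem sum_range_pow_chi {m n : ℕ} (hmn : Nat.log p m < n) :
    ∑ k ∈ range (p ^ n), chi p m k = (p : ℤ_[p]) ^ (n - (Nat.log p m + 1)) := by
  rw [← pow_sub_mul_pow p (Nat.succ_le_of_lt hmn), sum_range_chi]
  push_cast
  rfl

theorem vdpExpansion.apply_natCast {f : ℤ_[p] → ℤ_[p]} {B : ℕ → ℤ_[p]}
    (hB : vdpExpansion p f B) {k M : ℕ} (hk : k < M) :
    f k = ∑ m ∈ range M, B m * chi p m k := by
  rw [hB]
  refine tsum_eq_sum fun m hm => ?_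
  have hkm : k < m := hk.trans_le (not_lt.1 (mem_range.not.1 hm))
  rw [chi_natCast_of_lt_s10 (hkm.trans (Nat.lt_pow_succ_log_self (Fact.out : p.Prime).one_lt m)),
    if_neg hkm.ne, mul_zero]

theorem vdpExpansion.sum_range_pow {f : ℤ_[p] → ℤ_[p]} {B : ℕ → ℤ_[p]}
    (hB : vdpExpansion p f B) {n : ℕ} (hn : n ≠ 0) :
    ∑ k ∈ range (p ^ n), f k = ∑ m ∈ range (p ^ n), B m * (p : ℤ_[p]) ^ (n - (Nat.log p m + 1)) := by
  rw [sum_congr rfl fun k hk => hB.apply_natCast (mem_range.1 hk), sum_comm]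
  refine sum_congr rfl fun m hm => ?_
  rw [← mul_sum, sum_range_pow_chi (Nat.log_lt_of_lt_pow' hn (mem_range.1 hm))]

theorem pow_dvd_sum_coeff {B : ℕ → ℤ_[p]} (h1 : (p : ℤ_[p]) ∣ ∑ m ∈ range p, B m)
    (h2 : ∀ n : ℕ, 2 ≤ n → (p : ℤ_[p]) ^ n ∣ ∑ m ∈ Ico (p ^ (n - 1)) (p ^ n), B m)
    {n : ℕ} (hn : 1 ≤ n) :
    (p : ℤ_[p]) ^ n ∣ ∑ m ∈ range (p ^ n), B m * (p : ℤ_[p]) ^ (n - (Nat.log p m + 1)) := by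
  induction n, hn using Nat.le_induction with
  | base =>
    rw [pow_one, pow_one]
    rwa [sum_congr rfl fun m hm => by rw [Nat.log_of_lt (mem_range.1 hm), pow_zero, mul_one]]
  | succ n hn ih =>
    rw [← sum_range_add_sum_Ico _ (Nat.pow_le_pow_right (Fact.out : p.Prime).pos n.le_succ)]
    refine dvd_add ?_ ?_
    · have hlow : ∀ m ∈ range (p ^ n), B m * (p : ℤ_[p]) ^ (n + 1 - (Nat.log p m + 1)) =
          B m * (p : ℤ_[p]) ^ (n - (Nat.log p m + 1)) * p := by
        intro m hm
        have := Nat.log_lt_of_lt_pow' (by omega) (mem_range.1 hm)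
        rw [mul_assoc, ← pow_succ, Nat.sub_add_comm (by omega)]
      rw [sum_congr rfl hlow, ← sum_mul, pow_succ]
      exact mul_dvd_mul ih dvd_rfl
    · have htop : ∀ m ∈ Ico (p ^ n) (p ^ (n + 1)),
          B m * (p : ℤ_[p]) ^ (n + 1 - (Nat.log p m + 1)) = B m := by
        intro m hm
        rw [Nat.log_eq_of_pow_le_of_lt_pow (mem_Ico.1 hm).1 (mem_Ico.1 hm).2, Nat.sub_self,
          pow_zero, mul_one]
      rw [sum_congr rfl htop]
      simpa using h2 (n + 1) (by omega)

theorem vdpExpansion.pow_dvd_partialSum_pow {f : ℤ_[p] → ℤ_[p]} {B : ℕ → ℤ_[p]}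
    (hB : vdpExpansion p f B) (h1 : (p : ℤ_[p]) ∣ ∑ m ∈ range p, B m)
    (h2 : ∀ n : ℕ, 2 ≤ n → (p : ℤ_[p]) ^ n ∣ ∑ m ∈ Ico (p ^ (n - 1)) (p ^ n), B m) (n : ℕ) :
    (p : ℤ_[p]) ^ n ∣ partialSum f (p ^ n) := by
  rcases Nat.eq_zero_or_pos n with rfl | hn
  · exact pow_zero (p : ℤ_[p]) ▸ one_dvd _
  rw [partialSum, hB.sum_range_pow hn.ne']
  exact pow_dvd_sum_coeff h1 h2 hn

theorem IsLip.pow_dvd_partialSum_add_pow_sub {f : ℤ_[p] → ℤ_[p]} (hf : IsLip p f) (n b : ℕ) :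
    (p : ℤ_[p]) ^ n ∣ partialSum f (b + p ^ n) - partialSum f b - partialSum f (p ^ n) := by
  induction b with
  | zero => simp [partialSum]
  | succ b ih =>
    have hstep : partialSum f (b + 1 + p ^ n) - partialSum f (b + 1) - partialSum f (p ^ n) =
        (partialSum f (b + p ^ n) - partialSum f b - partialSum f (p ^ n)) +
          (f ↑(b + p ^ n) - f b) := by
      simp only [partialSum, add_right_comm b 1, sum_range_succ]
      ring
    rw [hstep]
    exact dvd_add ih (hf.pow_dvd_sub (by push_cast; rw [add_sub_cancel_left]))

theorem IsLip.pow_dvd_partialSum_add_mul_sub {f : ℤ_[p] → ℤ_[p]} (hf : IsLip p f)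
    (hsum : ∀ n : ℕ, (p : ℤ_[p]) ^ n ∣ partialSum f (p ^ n)) (n b c : ℕ) :
    (p : ℤ_[p]) ^ n ∣ partialSum f (b + c * p ^ n) - partialSum f b := by
  induction c with
  | zero => simp
  | succ c ih =>
    rw [add_one_mul, ← add_assoc]
    have := dvd_add (dvd_add (hf.pow_dvd_partialSum_add_pow_sub n (b + c * p ^ n)) (hsum n)) ih
    rwa [sub_add_cancel, sub_add_sub_cancel] at this

theorem IsLip.norm_partialSum_sub_le {f : ℤ_[p] → ℤ_[p]} (hf : IsLip p f)
    (hsum : ∀ n : ℕ, (p : ℤ_[p]) ^ n ∣ partialSum f (p ^ n)) (a b : ℕ) :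
    ‖partialSum f a - partialSum f b‖ ≤ ‖(a : ℤ_[p]) - b‖ := by
  wlog hba : b ≤ a generalizing a b
  · rw [norm_sub_rev, norm_sub_rev (a : ℤ_[p])]
    exact this b a (le_of_not_ge hba)
  obtain ⟨d, rfl⟩ := Nat.exists_eq_add_of_le hba
  rcases eq_or_ne d 0 with rfl | hd
  · simp
  rw [Nat.cast_add, add_sub_cancel_left]
  refine norm_le_norm_of_forall_pow_dvd (Nat.cast_ne_zero.2 hd) fun n hn => ?_
  have hdvd : (p : ℤ) ^ n ∣ d := (pow_p_dvd_int_iff n d).1 (by exact_mod_cast hn)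
  obtain ⟨c, rfl⟩ := Int.natCast_dvd_natCast.1 (by exact_mod_cast hdvd : ((p ^ n : ℕ) : ℤ) ∣ d)
  rw [mul_comm]
  exact hf.pow_dvd_partialSum_add_mul_sub hsum n b c

theorem exists_isLip_extend_natCast (S : ℕ → ℤ_[p])
    (hS : ∀ a b : ℕ, ‖S a - S b‖ ≤ ‖(a : ℤ_[p]) - b‖) :
    ∃ g : ℤ_[p] → ℤ_[p], IsLip p g ∧ ∀ n : ℕ, g n = S n := by
  let e := Equiv.ofInjective (Nat.cast : ℕ → ℤ_[p]) Nat.cast_injective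
  have hdense : Dense (Set.range (Nat.cast : ℕ → ℤ_[p])) := denseRange_natCast
  have hlip : LipschitzWith 1 (S ∘ e.symm) := by
    refine LipschitzWith.of_dist_le_mul fun x y => ?_
    obtain ⟨a, rfl⟩ := e.surjective x
    obtain ⟨b, rfl⟩ := e.surjective y
    simpa [Subtype.dist_eq, dist_eq_norm, e] using hS a b
  refine ⟨hdense.extend (S ∘ e.symm),
    isLip_iff_lipschitzWith.2 (hdense.lipschitzWith_extend hlip), fun n => ?_⟩
  simpa [e] using hdense.extend_eq hlip.continuous (e n)

end VDP

open VDP Finset in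
theorem stmt10 (p : ℕ) [Fact p.Prime] (f : ℤ_[p] → ℤ_[p]) (B : ℕ → ℤ_[p])
    (hf : IsLip p f) (hB : vdpExpansion p f B)
    (h1 : (p : ℤ_[p]) ∣ ∑ m ∈ Finset.range p, B m)
    (h2 : ∀ n : ℕ, 2 ≤ n →
      (p : ℤ_[p]) ^ n ∣ ∑ m ∈ Finset.Ico (p ^ (n - 1)) (p ^ n), B m) :
    ∃ g : ℤ_[p] → ℤ_[p], IsLip p g ∧ ∀ x, f x = g (x + 1) - g x := by
  obtain ⟨g, hg, hgS⟩ := exists_isLip_extend_natCast _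
    (hf.norm_partialSum_sub_le (hB.pow_dvd_partialSum_pow h1 h2))
  refine ⟨g, hg, congrFun (PadicInt.denseRange_natCast.equalizer hf.continuous
    ((hg.continuous.comp (continuous_add_const 1)).sub hg.continuous) (funext fun n => ?_))⟩
  simp only [Function.comp_apply]
  rw [← Nat.cast_succ, hgS, hgS, partialSum, partialSum, sum_range_succ, add_sub_cancel_left]
end
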